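/- Let N ≥ 1, let x, η ∈ ℝ^N with ‖η‖ ≤ ‖x‖, let α ∈ ℝ^N with ‖α‖² = 2 and σ_α(y) = y − ⟨y,α⟩α, and let p ≥ 3 be a real number. Define V(y) = A(x,y,η)^{p−2} A(x,σ_α(y),η)^{p−2} ( A(x,y,η)^{p−2} + A(x,σ_α(y),η)^{p−2} ). Then there is a constant C, depending only on p and N, such that for every y ∈ ℝ^N with A := A(x,y,η) > 0 and A_α := A(x,σ_α(y),η) > 0, and every direction vector v ∈ ℝ^N, the directional derivative ∂_v V(y) satisfies |∂_v V(y)| / V(y)² ≤ C ‖v‖ / ( A^{p−1} A_α^{p−1} ( A^{p−3} + A_α^{p−3} ) ). -/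

import Mathlib

open Set

/-- `A(x,y,η) = √(‖x‖² + ‖y‖² − 2⟨y,η⟩)`, viewed as a function of `y`. -/
noncomputable def Afun (N : ℕ) (x η y : EuclideanSpace ℝ (Fin N)) : ℝ :=
  Real.sqrt (‖x‖ ^ 2 + ‖y‖ ^ 2 - 2 * (inner ℝ y η : ℝ))

/-- The function `V(y) = A(x,y,η)^{p−2} A(x,σ_α(y),η)^{p−2}
(A(x,y,η)^{p−2} + A(x,σ_α(y),η)^{p−2})`, where `σ_α(y) = y − ⟨y,α⟩α`. -/
noncomputable def Vfun (N : ℕ) (x η α : EuclideanSpace ℝ (Fin N)) (p : ℝ)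
    (y : EuclideanSpace ℝ (Fin N)) : ℝ :=
  Afun N x η y ^ (p - 2) * Afun N x η (y - (inner ℝ y α : ℝ) • α) ^ (p - 2) *
    (Afun N x η y ^ (p - 2) + Afun N x η (y - (inner ℝ y α : ℝ) • α) ^ (p - 2))

/-!
Write `a = A(x,y,η)`, `b = A(x,σ_α y,η)` and `q = p - 2`, so `V = a^q b^q (a^q + b^q)`.
Both `A(x,·,η)` and `A(x,σ_α ·,η)` have derivatives of norm at most `1`, because
`‖y - η‖ ≤ A(x,y,η)` when `‖η‖ ≤ ‖x‖` and `σ_α` is an isometry. The logarithmic derivative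
of `V` is therefore at most `2q‖v‖(1/a + 1/b)`, so `|∂_v V| / V² ≤ 2q‖v‖(1/a + 1/b) / V`.
The bound then reduces to Chebyshev's inequality
`(a + b)(a^{q-1} + b^{q-1}) ≤ 2(a^q + b^q)`, which gives the constant `C = 4(p - 2)`.
-/

theorem add_mul_rpow_add_rpow_le {a b r : ℝ} (ha : 0 ≤ a) (hb : 0 ≤ b) (hr : 0 ≤ r) :
    (a + b) * (a ^ r + b ^ r) ≤ 2 * (a ^ (r + 1) + b ^ (r + 1)) := by
  rw [Real.rpow_add_one' ha (by positivity), Real.rpow_add_one' hb (by positivity)]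
  have : 0 ≤ (a - b) * (a ^ r - b ^ r) := by
    rcases le_total a b with hab | hab
    · exact mul_nonneg_of_nonpos_of_nonpos (by linarith)
        (by linarith [Real.rpow_le_rpow ha hab hr])
    · exact mul_nonneg (by linarith) (by linarith [Real.rpow_le_rpow hb hab hr])
  nlinarith

theorem inv_add_inv_div_le {a b q : ℝ} (ha : 0 < a) (hb : 0 < b) (hq : 1 ≤ q) :
    (a⁻¹ + b⁻¹) / (a ^ q * b ^ q * (a ^ q + b ^ q)) ≤
      2 / (a ^ (q + 1) * b ^ (q + 1) * (a ^ (q - 1) + b ^ (q - 1))) := by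
  have hcheb := add_mul_rpow_add_rpow_le ha.le hb.le (sub_nonneg.mpr hq)
  rw [sub_add_cancel] at hcheb
  rw [Real.rpow_add_one ha.ne', Real.rpow_add_one hb.ne', inv_add_inv ha.ne' hb.ne',
    div_div, div_le_div_iff₀ (by positivity) (by positivity)]
  have hab : 0 ≤ a ^ q * a * (b ^ q * b) := by positivity
  calc (a + b) * (a ^ q * a * (b ^ q * b) * (a ^ (q - 1) + b ^ (q - 1)))
      = a ^ q * a * (b ^ q * b) * ((a + b) * (a ^ (q - 1) + b ^ (q - 1))) := by ring
    _ ≤ a ^ q * a * (b ^ q * b) * (2 * (a ^ q + b ^ q)) := by gcongr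
    _ = 2 * (a * b * (a ^ q * b ^ q * (a ^ q + b ^ q))) := by ring

theorem div_sq_le_of_le_mul_div_add_div {a b q t D : ℝ} (ha : 0 < a) (hb : 0 < b) (hq : 1 ≤ q)
    (ht : 0 ≤ t) (hD : D ≤ 2 * q * (t / a + t / b) * (a ^ q * b ^ q * (a ^ q + b ^ q))) :
    D / (a ^ q * b ^ q * (a ^ q + b ^ q)) ^ 2 ≤
      4 * q * t / (a ^ (q + 1) * b ^ (q + 1) * (a ^ (q - 1) + b ^ (q - 1))) := by
  set W := a ^ q * b ^ q * (a ^ q + b ^ q)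
  have hW : 0 < W := by positivity
  calc D / W ^ 2 ≤ 2 * q * (t / a + t / b) * W / W ^ 2 := by gcongr
    _ = 2 * q * t * ((a⁻¹ + b⁻¹) / W) := by field_simp
    _ ≤ 2 * q * t * (2 / (a ^ (q + 1) * b ^ (q + 1) * (a ^ (q - 1) + b ^ (q - 1)))) := by
        gcongr ?_ * ?_
        exact inv_add_inv_div_le ha hb hq
    _ = 4 * q * t / (a ^ (q + 1) * b ^ (q + 1) * (a ^ (q - 1) + b ^ (q - 1))) := by ring

theorem abs_add_mul_add_le {F G : ℝ} (hF : 0 ≤ F) (hG : 0 ≤ G) (s t : ℝ) :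
    |F * s + G * t + (F + G) * (s + t)| ≤ 2 * (F + G) * (|s| + |t|) := by
  rw [abs_le]
  constructor <;> nlinarith [le_abs_self s, neg_abs_le s, le_abs_self t, neg_abs_le t]

theorem abs_fderiv_rpow_mul_rpow_mul_add_le {E : Type*} [NormedAddCommGroup E]
    [NormedSpace ℝ E] {f g : E → ℝ} {f' g' : E →L[ℝ] ℝ} {y : E} {q : ℝ}
    (hf : HasFDerivAt f f' y) (hg : HasFDerivAt g g' y) (hfy : 0 < f y) (hgy : 0 < g y)
    (hq : 0 ≤ q) (v : E) :
    |fderiv ℝ (fun z => f z ^ q * g z ^ q * (f z ^ q + g z ^ q)) y v| ≤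
      2 * q * (|f' v| / f y + |g' v| / g y) * (f y ^ q * g y ^ q * (f y ^ q + g y ^ q)) := by
  have hF := hf.rpow_const (p := q) (Or.inl hfy.ne')
  have hG := hg.rpow_const (p := q) (Or.inl hgy.ne')
  have hV : HasFDerivAt (fun z => f z ^ q * g z ^ q * (f z ^ q + g z ^ q)) _ y :=
    (hF.mul hG).mul (hF.add hG)
  rw [hV.fderiv]
  simp only [add_apply, smul_apply, smul_eq_mul, Pi.mul_apply]
  rw [Real.rpow_sub_one hfy.ne', Real.rpow_sub_one hgy.ne']
  set F := f y ^ q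
  set G := g y ^ q
  -- `V'/V = q (s + t + (F s + G t) / (F + G))` with `s = f'/f`, `t = g'/g`
  have hlog : F * G * (q * (F / f y) * f' v + q * (G / g y) * g' v) +
        (F + G) * (F * (q * (G / g y) * g' v) + G * (q * (F / f y) * f' v)) =
      q * (F * G) *
        (F * (f' v / f y) + G * (g' v / g y) + (F + G) * (f' v / f y + g' v / g y)) := by
    ring
  have hFG : 0 ≤ F * G := by positivity
  rw [hlog, abs_mul, abs_of_nonneg (by positivity)]
  calc q * (F * G) * |F * (f' v / f y) + G * (g' v / g y) + (F + G) * (f' v / f y + g' v / g y)|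
      ≤ q * (F * G) * (2 * (F + G) * (|f' v / f y| + |g' v / g y|)) := by
        gcongr; exact abs_add_mul_add_le (by positivity) (by positivity) _ _
    _ = _ := by rw [abs_div, abs_div, abs_of_pos hfy, abs_of_pos hgy]; ring

theorem reflection_orthogonal_singleton_apply_of_inner_self_eq_two {F : Type*}
    [NormedAddCommGroup F] [InnerProductSpace ℝ F] {α : F} (hα : (inner ℝ α α : ℝ) = 2)
    (y : F) : (ℝ ∙ α)ᗮ.reflection y = y - (inner ℝ y α : ℝ) • α := by
  have hn : ‖α‖ ^ 2 = 2 := by rw [← real_inner_self_eq_norm_sq, hα]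
  rw [Submodule.reflection_orthogonal_apply, Submodule.reflection_singleton_apply,
    RCLike.ofReal_real_eq_id, id, hn, real_inner_comm]
  module

section Afun

variable {N : ℕ} {x η : EuclideanSpace ℝ (Fin N)}

theorem norm_sub_le_Afun (hx : ‖η‖ ≤ ‖x‖) (y : EuclideanSpace ℝ (Fin N)) :
    ‖y - η‖ ≤ Afun N x η y := by
  apply Real.le_sqrt_of_sq_le
  rw [norm_sub_sq_real]
  nlinarith [norm_nonneg η]

theorem hasFDerivAt_Afun {y : EuclideanSpace ℝ (Fin N)} (hy : 0 < Afun N x η y) :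
    HasFDerivAt (Afun N x η) ((Afun N x η y)⁻¹ • innerSL ℝ (y - η)) y := by
  have hinner : HasFDerivAt (fun z => (inner ℝ z η : ℝ)) (innerSL ℝ η) y :=
    (innerSL ℝ η).hasFDerivAt.congr_of_eventuallyEq
      (Filter.Eventually.of_forall fun z => by simp [real_inner_comm η z])
  have hsq : HasFDerivAt (fun z => ‖x‖ ^ 2 + ‖z‖ ^ 2 - 2 * (inner ℝ z η : ℝ))
      (2 • innerSL ℝ y - (2 : ℝ) • innerSL ℝ η) y :=
    ((hasStrictFDerivAt_norm_sq y).hasFDerivAt.const_add _).sub (hinner.const_mul 2)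
  refine (hsq.sqrt (Real.sqrt_pos.mp hy).ne').congr_fderiv ?_
  ext v
  simp only [Afun, smul_apply, sub_apply, innerSL_apply_apply, smul_eq_mul, inner_sub_left]
  field_simp
  ring

theorem abs_inv_Afun_smul_innerSL_apply_le (hx : ‖η‖ ≤ ‖x‖) (y v : EuclideanSpace ℝ (Fin N)) :
    |((Afun N x η y)⁻¹ • innerSL ℝ (y - η)) v| ≤ ‖v‖ := by
  rcases (show 0 ≤ Afun N x η y from Real.sqrt_nonneg _).eq_or_lt with hy | hy
  · simp [← hy]
  rw [smul_apply, innerSL_apply_apply, smul_eq_mul, abs_mul, abs_inv, abs_of_pos hy,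
    inv_mul_le_iff₀ hy]
  calc |(inner ℝ (y - η) v : ℝ)| ≤ ‖y - η‖ * ‖v‖ := abs_real_inner_le_norm _ _
    _ ≤ Afun N x η y * ‖v‖ := by gcongr; exact norm_sub_le_Afun hx y

theorem Vfun_eq_reflection {α : EuclideanSpace ℝ (Fin N)} (hα : (inner ℝ α α : ℝ) = 2)
    (p : ℝ) :
    Vfun N x η α p = fun z =>
      Afun N x η z ^ (p - 2) * Afun N x η ((ℝ ∙ α)ᗮ.reflection z) ^ (p - 2) *
        (Afun N x η z ^ (p - 2) + Afun N x η ((ℝ ∙ α)ᗮ.reflection z) ^ (p - 2)) := by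
  funext z
  simp only [Vfun, reflection_orthogonal_singleton_apply_of_inner_self_eq_two hα]

end Afun

theorem deriv_V_quotient_bound_general
    (N : ℕ) (p : ℝ) (hp : 3 ≤ p) :
    ∃ C : ℝ, ∀ x η : EuclideanSpace ℝ (Fin N), ‖η‖ ≤ ‖x‖ →
      ∀ α : EuclideanSpace ℝ (Fin N), (inner ℝ α α : ℝ) = 2 →
      ∀ y : EuclideanSpace ℝ (Fin N),
        0 < Afun N x η y → 0 < Afun N x η (y - (inner ℝ y α : ℝ) • α) →
      ∀ v : EuclideanSpace ℝ (Fin N),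
        |fderiv ℝ (Vfun N x η α p) y v| / (Vfun N x η α p y) ^ 2 ≤
          C * ‖v‖ /
            (Afun N x η y ^ (p - 1) *
              Afun N x η (y - (inner ℝ y α : ℝ) • α) ^ (p - 1) *
              (Afun N x η y ^ (p - 3) +
                Afun N x η (y - (inner ℝ y α : ℝ) • α) ^ (p - 3))) := by
  refine ⟨4 * (p - 2), fun x η hx α hα y ha hb v => ?_⟩
  have hq : 1 ≤ p - 2 := by linarith
  set σ := (ℝ ∙ α)ᗮ.reflection
  rw [← reflection_orthogonal_singleton_apply_of_inner_self_eq_two hα] at hb ⊢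
  have hderiv := abs_fderiv_rpow_mul_rpow_mul_add_le (g := fun z => Afun N x η (σ z))
    (hasFDerivAt_Afun ha) ((hasFDerivAt_Afun hb).comp y σ.hasFDerivAt) ha hb
    (zero_le_one.trans hq) v
  have hda := abs_inv_Afun_smul_innerSL_apply_le hx y v
  have hdb := abs_inv_Afun_smul_innerSL_apply_le hx (σ y) (σ v)
  rw [σ.norm_map] at hdb
  rw [← Vfun_eq_reflection hα] at hderiv
  have hVy : Vfun N x η α p y = _ := congrFun (Vfun_eq_reflection hα p) y
  rw [hVy, show p - 1 = p - 2 + 1 by ring, show p - 3 = p - 2 - 1 by ring]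
  refine div_sq_le_of_le_mul_div_add_div ha hb hq (norm_nonneg v) (hderiv.trans ?_)
  gcongr
  exact hdb

/-- for `p ≥ 3` there is a constant `C`, depending only on `p` and `N`,
such that whenever `‖η‖ ≤ ‖x‖`, `‖α‖² = 2`, `A := A(x,y,η) > 0` and
`A_α := A(x,σ_α(y),η) > 0`, every directional derivative of `V` satisfies
`|∂_v V(y)| / V(y)² ≤ C ‖v‖ / (A^{p−1} A_α^{p−1} (A^{p−3} + A_α^{p−3}))`. -/
theorem deriv_V_quotient_bound
    (N : ℕ) (hN : 1 ≤ N) (p : ℝ) (hp : 3 ≤ p) :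
    ∃ C : ℝ, ∀ x η : EuclideanSpace ℝ (Fin N), ‖η‖ ≤ ‖x‖ →
      ∀ α : EuclideanSpace ℝ (Fin N), (inner ℝ α α : ℝ) = 2 →
      ∀ y : EuclideanSpace ℝ (Fin N),
        0 < Afun N x η y → 0 < Afun N x η (y - (inner ℝ y α : ℝ) • α) →
      ∀ v : EuclideanSpace ℝ (Fin N),
        |fderiv ℝ (Vfun N x η α p) y v| / (Vfun N x η α p y) ^ 2 ≤
          C * ‖v‖ /
            (Afun N x η y ^ (p - 1) *
              Afun N x η (y - (inner ℝ y α : ℝ) • α) ^ (p - 1) *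
              (Afun N x η y ^ (p - 3) +
                Afun N x η (y - (inner ℝ y α : ℝ) • α) ^ (p - 3))) :=
  deriv_V_quotient_bound_general N p hp
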